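/- Equivalence of the natural-policy-gradient update and the KL-regularized distributional update under tabular softmax parameterization (Remark/Proposition, single-state version). Let Y be a finite nonempty set, π_ref a strictly positive probability vector on Y, θ : Y → ℝ, and π_θ(y) := exp(θ(y)) / Σ_{y'} exp(θ(y')) the softmax policy. Let S : Y → ℝ, β > 0, η > 0. Define V := Σ_y π_θ(y)·( S(y) − β·log(π_θ(y)/π_ref(y)) ) and the advantage A(y) := S(y) − β·log(π_θ(y)/π_ref(y)) − V. For any constant c ∈ ℝ, set θ⁺(y) := θ(y) + (1/(η+β))·( A(y) + c ). Then the softmax policy of θ⁺ satisfies π_{θ⁺}(y) = π_θ(y)·exp( A(y)/(η+β) ) / Σ_{y'} π_θ(y')·exp( A(y')/(η+β) ), and π_{θ⁺} is the unique maximizer over the probability simplex Δ(Y) of π ↦ Σ_y π(y)·S(y) − β·KL(π‖π_ref) − η·KL(π‖π_θ). -/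

import Mathlib

open BigOperators

/-- Discrete Kullback–Leibler divergence `KL(p‖q) = Σ_y p(y)·log(p(y)/q(y))`,
with the convention `0·log 0 = 0` (automatic since `Real.log 0 = 0`). -/
noncomputable def KLdiv {Y : Type*} [Fintype Y] (p q : Y → ℝ) : ℝ :=
  ∑ y, p y * Real.log (p y / q y)

/-- `p` is a probability vector on the finite set `Y`. -/
def IsProbVec {Y : Type*} [Fintype Y] (p : Y → ℝ) : Prop :=
  (∀ y, 0 ≤ p y) ∧ ∑ y, p y = 1

/-!
Under softmax, adding `f` to the logits tilts the policy by `exp f`, and constants in `f` cancel in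
the normalization, so `π_{θ⁺}` is the Gibbs tilt of `π_θ` by `A/(η+β)`. The chain rule
`KL(p‖π_ref) = KL(p‖π_θ) + Σ p log(π_θ/π_ref)` turns the objective into
`V + (η+β)·(Σ p·A/(η+β) − KL(p‖π_θ))`, and the Gibbs variational identity rewrites the bracket as
`log Z − KL(p‖π_{θ⁺})` with `Z = Σ π_θ·exp(A/(η+β))`. Gibbs' inequality then gives maximality
and uniqueness.
-/

open Finset Real InformationTheory

noncomputable section

variable {Y : Type*} [Fintype Y]

def softmax (θ : Y → ℝ) (y : Y) : ℝ :=
  exp (θ y) / ∑ y', exp (θ y')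

def tilt (q f : Y → ℝ) (y : Y) : ℝ :=
  q y * exp (f y) / ∑ y', q y' * exp (f y')

section KL

variable {p q r : Y → ℝ}

lemma KLdiv_eq_sum_mul_klFun (hq : ∀ y, 0 < q y) (hpq : ∑ y, p y = ∑ y, q y) :
    KLdiv p q = ∑ y, q y * klFun (p y / q y) := by
  have hterm : ∀ y, q y * klFun (p y / q y) = p y * log (p y / q y) + (q y - p y) := by
    intro y
    have := (hq y).ne'
    simp only [klFun]
    field_simp
    ring
  rw [sum_congr rfl fun y _ => hterm y, sum_add_distrib, sum_sub_distrib, hpq, sub_self,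
    add_zero, KLdiv]

lemma KLdiv_nonneg (hp : ∀ y, 0 ≤ p y) (hq : ∀ y, 0 < q y) (hpq : ∑ y, p y = ∑ y, q y) :
    0 ≤ KLdiv p q := by
  rw [KLdiv_eq_sum_mul_klFun hq hpq]
  exact sum_nonneg fun y _ => mul_nonneg (hq y).le (klFun_nonneg (div_nonneg (hp y) (hq y).le))

lemma eq_of_KLdiv_eq_zero (hp : ∀ y, 0 ≤ p y) (hq : ∀ y, 0 < q y)
    (hpq : ∑ y, p y = ∑ y, q y) (h : KLdiv p q = 0) : p = q := by
  have hklFun_nonneg : ∀ y, 0 ≤ klFun (p y / q y) := fun y =>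
    klFun_nonneg (div_nonneg (hp y) (hq y).le)
  rw [KLdiv_eq_sum_mul_klFun hq hpq,
    sum_eq_zero_iff_of_nonneg fun y _ => mul_nonneg (hq y).le (hklFun_nonneg y)] at h
  funext y
  have hklFun : klFun (p y / q y) = 0 := (mul_eq_zero.mp (h y (mem_univ y))).resolve_left (hq y).ne'
  rwa [klFun_eq_zero_iff (div_nonneg (hp y) (hq y).le), div_eq_one_iff_eq (hq y).ne'] at hklFun

lemma KLdiv_self (hp : ∀ y, 0 < p y) : KLdiv p p = 0 :=
  sum_eq_zero fun y _ => by rw [div_self (hp y).ne', log_one, mul_zero]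

lemma KLdiv_eq_KLdiv_add (hq : ∀ y, 0 < q y) (hr : ∀ y, 0 < r y) :
    KLdiv p r = KLdiv p q + ∑ y, p y * log (q y / r y) := by
  rw [KLdiv, KLdiv, ← sum_add_distrib]
  refine sum_congr rfl fun y _ => ?_
  rcases eq_or_ne (p y) 0 with hp | hp
  · simp [hp]
  · rw [← mul_add, ← log_mul (div_ne_zero hp (hq y).ne') (div_ne_zero (hq y).ne' (hr y).ne'),
      div_mul_div_cancel₀ (hq y).ne']

end KL

section Tilt

lemma tilt_add_const (q f : Y → ℝ) (c : ℝ) : tilt q (fun y => f y + c) = tilt q f := by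
  funext y
  simp only [tilt, exp_add, ← mul_assoc, ← sum_mul]
  exact mul_div_mul_right _ _ (exp_pos c).ne'

lemma softmax_eq_tilt_one (θ : Y → ℝ) : softmax θ = tilt 1 θ := by
  funext y
  simp [softmax, tilt]

variable [Nonempty Y]

lemma sum_mul_exp_pos {q : Y → ℝ} (hq : ∀ y, 0 < q y) (f : Y → ℝ) :
    0 < ∑ y, q y * exp (f y) :=
  sum_pos (fun y _ => mul_pos (hq y) (exp_pos _)) univ_nonempty

lemma tilt_pos {q : Y → ℝ} (hq : ∀ y, 0 < q y) (f : Y → ℝ) (y : Y) : 0 < tilt q f y :=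
  div_pos (mul_pos (hq y) (exp_pos _)) (sum_mul_exp_pos hq f)

lemma sum_tilt {q : Y → ℝ} (hq : ∀ y, 0 < q y) (f : Y → ℝ) : ∑ y, tilt q f y = 1 := by
  simp only [tilt, ← sum_div, div_self (sum_mul_exp_pos hq f).ne']

lemma tilt_tilt {q : Y → ℝ} (hq : ∀ y, 0 < q y) (f g : Y → ℝ) :
    tilt (tilt q f) g = tilt q (fun y => f y + g y) := by
  funext y
  have hZ := (sum_mul_exp_pos hq f).ne'
  simp only [tilt, div_mul_eq_mul_div, ← sum_div, exp_add, mul_assoc]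
  field_simp

lemma softmax_add (θ f : Y → ℝ) : softmax (fun y => θ y + f y) = tilt (softmax θ) f := by
  rw [softmax_eq_tilt_one, softmax_eq_tilt_one, tilt_tilt (q := 1) fun _ => one_pos]

lemma softmax_pos (θ : Y → ℝ) (y : Y) : 0 < softmax θ y := by
  rw [softmax_eq_tilt_one]
  exact tilt_pos (fun _ => one_pos) θ y

lemma KLdiv_tilt {p q : Y → ℝ} (hp : IsProbVec p) (hq : ∀ y, 0 < q y) (f : Y → ℝ) :
    KLdiv p (tilt q f) = KLdiv p q - ∑ y, p y * f y + log (∑ y, q y * exp (f y)) := by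
  have hZ := sum_mul_exp_pos hq f
  have hlog : ∀ y, log (q y / tilt q f y) = log (∑ y, q y * exp (f y)) - f y := by
    intro y
    rw [tilt, div_div_eq_mul_div, mul_div_mul_left _ _ (hq y).ne', log_div hZ.ne' (exp_pos _).ne',
      log_exp]
  rw [KLdiv_eq_KLdiv_add hq (tilt_pos hq f), sum_congr rfl fun y _ => by rw [hlog y]]
  simp only [mul_sub, sum_sub_distrib, ← sum_mul, hp.2]
  ring

lemma sum_mul_sub_KLdiv_sub_KLdiv_eq {p q r S A : Y → ℝ} {β η V : ℝ} (hp : IsProbVec p)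
    (hq : ∀ y, 0 < q y) (hr : ∀ y, 0 < r y) (hηβ : η + β ≠ 0)
    (hA : ∀ y, A y = S y - β * log (q y / r y) - V) :
    ∑ y, p y * S y - β * KLdiv p r - η * KLdiv p q
      = V + (η + β) * (log (∑ y, q y * exp (A y / (η + β)))
          - KLdiv p (tilt q fun y => A y / (η + β))) := by
  have hS : ∀ y, S y = A y + β * log (q y / r y) + V := fun y => by rw [hA]; ring
  rw [KLdiv_tilt hp hq, KLdiv_eq_KLdiv_add hq hr]
  simp only [hS, mul_add, sum_add_distrib, ← sum_mul, ← mul_div_assoc, ← sum_div, hp.2]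
  rw [show ∑ y, p y * (β * log (q y / r y)) = β * ∑ y, p y * log (q y / r y) by
    rw [mul_sum]; exact sum_congr rfl fun _ _ => mul_left_comm _ _ _]
  linear_combination -mul_div_cancel₀ (∑ y, p y * A y) hηβ

end Tilt

end

theorem npg_softmax_equivalence_general
    {Y : Type*} [Fintype Y] [Nonempty Y]
    (πref : Y → ℝ) (hπref0 : ∀ y, 0 < πref y)
    (θ : Y → ℝ) (πθ : Y → ℝ)
    (hπθ : ∀ y, πθ y = Real.exp (θ y) / ∑ y', Real.exp (θ y'))
    (S : Y → ℝ) (β η : ℝ) (hβ : 0 < β) (hη : 0 < η)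
    (V : ℝ)
    (A : Y → ℝ) (hA : ∀ y, A y = S y - β * Real.log (πθ y / πref y) - V)
    (c : ℝ) (θplus : Y → ℝ)
    (hθplus : ∀ y, θplus y = θ y + (1 / (η + β)) * (A y + c))
    (πplus : Y → ℝ)
    (hπplus : ∀ y, πplus y = Real.exp (θplus y) / ∑ y', Real.exp (θplus y')) :
    (∀ y, πplus y
        = πθ y * Real.exp (A y / (η + β)) / ∑ y', πθ y' * Real.exp (A y' / (η + β))) ∧
    (∀ p : Y → ℝ, IsProbVec p →
      (∑ y, p y * S y) - β * KLdiv p πref - η * KLdiv p πθ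
        ≤ (∑ y, πplus y * S y) - β * KLdiv πplus πref - η * KLdiv πplus πθ) ∧
    (∀ p : Y → ℝ, IsProbVec p →
      (∑ y, p y * S y) - β * KLdiv p πref - η * KLdiv p πθ
        = (∑ y, πplus y * S y) - β * KLdiv πplus πref - η * KLdiv πplus πθ →
      p = πplus) := by
  have hηβ : 0 < η + β := add_pos hη hβ
  have hπθ_eq : πθ = softmax θ := funext hπθ
  have hπθ0 : ∀ y, 0 < πθ y := hπθ_eq ▸ softmax_pos θ
  have hπplus_eq : πplus = tilt πθ fun y => A y / (η + β) := by
    have hθplus_eq : θplus = fun y => θ y + (A y / (η + β) + c / (η + β)) :=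
      funext fun y => by rw [hθplus]; ring
    rw [show πplus = softmax θplus from funext hπplus, hθplus_eq, softmax_add, ← hπθ_eq,
      tilt_add_const]
  have hπplus0 : ∀ y, 0 < πplus y := hπplus_eq ▸ tilt_pos hπθ0 _
  have hπplus_prob : IsProbVec πplus :=
    ⟨fun y => (hπplus0 y).le, by rw [hπplus_eq, sum_tilt hπθ0]⟩
  have hsum_eq : ∀ p : Y → ℝ, IsProbVec p → ∑ y, p y = ∑ y, πplus y := fun p hp =>
    hp.2.trans hπplus_prob.2.symm
  have hobj := fun p (hp : IsProbVec p) =>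
    hπplus_eq ▸ sum_mul_sub_KLdiv_sub_KLdiv_eq hp hπθ0 hπref0 hηβ.ne' hA
  refine ⟨fun y => by rw [hπplus_eq]; rfl, fun p hp => ?_, fun p hp hmax => ?_⟩
  · rw [hobj p hp, hobj πplus hπplus_prob, KLdiv_self hπplus0]
    nlinarith [KLdiv_nonneg hp.1 hπplus0 (hsum_eq p hp)]
  · rw [hobj p hp, hobj πplus hπplus_prob, KLdiv_self hπplus0] at hmax
    have hKL : KLdiv p πplus = 0 := by nlinarith
    exact eq_of_KLdiv_eq_zero hp.1 hπplus0 (hsum_eq p hp) hKL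

/-- **Equivalence of the natural-policy-gradient update and the KL-regularized
distributional update under tabular softmax parameterization** (single-state version).
With `π_θ` the softmax policy of `θ`, advantage `A(y) = S(y) − β·log(π_θ(y)/π_ref(y)) − V`,
and `θ⁺ = θ + (A + c)/(η+β)`, the softmax policy of `θ⁺` has the Gibbs form
`π_{θ⁺}(y) ∝ π_θ(y)·exp(A(y)/(η+β))` and is the unique maximizer over the simplex of
`π ↦ Σ_y π(y)S(y) − β·KL(π‖π_ref) − η·KL(π‖π_θ)`. -/
theorem npg_softmax_equivalence
    {Y : Type*} [Fintype Y] [Nonempty Y]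
    (πref : Y → ℝ) (hπref0 : ∀ y, 0 < πref y) (hπref1 : ∑ y, πref y = 1)
    (θ : Y → ℝ) (πθ : Y → ℝ)
    (hπθ : ∀ y, πθ y = Real.exp (θ y) / ∑ y', Real.exp (θ y'))
    (S : Y → ℝ) (β η : ℝ) (hβ : 0 < β) (hη : 0 < η)
    (V : ℝ) (hV : V = ∑ y, πθ y * (S y - β * Real.log (πθ y / πref y)))
    (A : Y → ℝ) (hA : ∀ y, A y = S y - β * Real.log (πθ y / πref y) - V)
    (c : ℝ) (θplus : Y → ℝ)
    (hθplus : ∀ y, θplus y = θ y + (1 / (η + β)) * (A y + c))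
    (πplus : Y → ℝ)
    (hπplus : ∀ y, πplus y = Real.exp (θplus y) / ∑ y', Real.exp (θplus y')) :
    (∀ y, πplus y
        = πθ y * Real.exp (A y / (η + β)) / ∑ y', πθ y' * Real.exp (A y' / (η + β))) ∧
    (∀ p : Y → ℝ, IsProbVec p →
      (∑ y, p y * S y) - β * KLdiv p πref - η * KLdiv p πθ
        ≤ (∑ y, πplus y * S y) - β * KLdiv πplus πref - η * KLdiv πplus πθ) ∧
    (∀ p : Y → ℝ, IsProbVec p →
      (∑ y, p y * S y) - β * KLdiv p πref - η * KLdiv p πθ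
        = (∑ y, πplus y * S y) - β * KLdiv πplus πref - η * KLdiv πplus πθ →
      p = πplus) :=
  npg_softmax_equivalence_general πref hπref0 θ πθ hπθ S β η hβ hη V A hA c θplus hθplus πplus
    hπplus
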